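/- arXiv:1111.0264 — 7 statements merged into one kernel-verified Lean document; each statement's English description precedes it below -/
import Mathlib

section
/- Let w⊥ be a linear subspace of v and ξ ∈ w⊥ a nonzero vector. For Z ∈ z, write J_Z ξ = P_Z ξ + F_Z ξ where F_Z ξ is the orthogonal projection of J_Z ξ onto w⊥. Then there exists an orthonormal basis {Z₁,…,Z_m} of z and a uniquely determined m-tuple (φ₁,…,φ_m) with 0 ≤ φ₁ ≤ ⋯ ≤ φ_m ≤ π/2 such that ‖F_{Z_i} ξ‖² = cos²(φ_i)‖ξ‖² for each i, and ⟨F_{Z_i}ξ, F_{Z_j}ξ⟩ = 0 for i ≠ j. -/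
/-!
Put `A Z := proj_W (J_Z ξ)`. Since `J_Z` is `‖Z‖` times an isometry, `‖A Z‖ ≤ ‖Z‖ ‖ξ‖`.
An orthonormal basis `Z` with pairwise orthogonal images `A Z_i` is exactly an orthonormal
eigenbasis of `A* A`, with eigenvalues `‖A Z_i‖²`. So the numbers `cos φ_i ‖ξ‖` are the singular
values of `A`, which exist and, listed in decreasing order, are unique.
-/

open Module RealInnerProductSpace

open Polynomial in
theorem LinearMap.charpoly_eq_prod_of_apply_basis_eq_smul {K M ι : Type*} [Field K]
    [AddCommGroup M] [Module K M] [Module.Free K M] [Module.Finite K M]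
    [Fintype ι] [DecidableEq ι] (f : M →ₗ[K] M) (b : Basis ι K M) (μ : ι → K)
    (h : ∀ i, f (b i) = μ i • b i) :
    f.charpoly = ∏ i, (X - C (μ i)) := by
  have hdiag : LinearMap.toMatrix b b f = Matrix.diagonal μ := by
    ext i j
    rcases eq_or_ne i j with rfl | hij
    · simp [LinearMap.toMatrix_apply, h]
    · simp [LinearMap.toMatrix_apply, h, hij, Finsupp.single_eq_of_ne hij]
  rw [← f.charpoly_toMatrix b, hdiag, Matrix.charpoly_diagonal]

open Polynomial in
theorem LinearMap.IsSymmetric.eigenvalues_eq_of_apply_basis_eq_smul {𝕜 E : Type*} [RCLike 𝕜]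
    [NormedAddCommGroup E] [InnerProductSpace 𝕜 E] [FiniteDimensional 𝕜 E]
    {T : E →ₗ[𝕜] E} (hT : T.IsSymmetric) {n : ℕ} (hn : finrank 𝕜 E = n)
    (b : Basis (Fin n) 𝕜 E) {μ : Fin n → ℝ} (h : ∀ i, T (b i) = (μ i : 𝕜) • b i)
    (hμ : Antitone μ) : hT.eigenvalues hn = μ := by
  rw [← List.ofFn_inj, ← hT.sort_roots_charpoly_eq_eigenvalues hn,
    T.charpoly_eq_prod_of_apply_basis_eq_smul b _ h,
    roots_prod _ _ (by simp [Finset.prod_ne_zero_iff, X_sub_C_ne_zero])]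
  have hre : (RCLike.re ∘ fun i => (μ i : 𝕜)) = μ := funext fun i => RCLike.ofReal_re (μ i)
  simp only [roots_X_sub_C, Multiset.bind_singleton, Multiset.map_map]
  rw [hre, Fin.univ_val_map, Multiset.coe_sort]
  refine List.mergeSort_of_pairwise ?_
  simpa only [decide_eq_true_eq, ← List.sortedGE_iff_pairwise] using hμ.sortedGE_ofFn

namespace LinearMap

variable {𝕜 E F : Type*} [RCLike 𝕜]
  [NormedAddCommGroup E] [InnerProductSpace 𝕜 E] [FiniteDimensional 𝕜 E]
  [NormedAddCommGroup F] [InnerProductSpace 𝕜 F] [FiniteDimensional 𝕜 F] (A : E →ₗ[𝕜] F)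

theorem adjoint_comp_self_apply_of_orthonormal {ι : Type*} [Fintype ι] {Z : ι → E}
    (hZ : Orthonormal 𝕜 Z) (hcard : Fintype.card ι = finrank 𝕜 E)
    (hAZ : Pairwise fun i j => inner 𝕜 (A (Z i)) (A (Z j)) = 0) (i : ι) :
    (adjoint A ∘ₗ A) (Z i) = ((‖A (Z i)‖ ^ 2 : ℝ) : 𝕜) • Z i := by
  have : Nonempty ι := ⟨i⟩
  refine InnerProductSpace.ext_inner_right_basis
    (basisOfOrthonormalOfCardEqFinrank hZ hcard) fun j => ?_
  rw [coe_basisOfOrthonormalOfCardEqFinrank, comp_apply, adjoint_inner_left, inner_smul_left,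
    RCLike.conj_ofReal]
  rcases eq_or_ne i j with rfl | hij
  · simp [inner_self_eq_norm_sq_to_K, hZ.1 i]
  · rw [hAZ hij, hZ.2 hij, mul_zero]

theorem norm_apply_eq_singularValues_of_orthonormal {n : ℕ} (hn : finrank 𝕜 E = n)
    {Z : Fin n → E} (hZ : Orthonormal 𝕜 Z)
    (hAZ : Pairwise fun i j => inner 𝕜 (A (Z i)) (A (Z j)) = 0)
    (hanti : Antitone fun i => ‖A (Z i)‖) (i : Fin n) :
    ‖A (Z i)‖ = A.singularValues i := by
  have : Nonempty (Fin n) := ⟨i⟩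
  have hcard : Fintype.card (Fin n) = finrank 𝕜 E := by simp [hn]
  have heig := A.isSymmetric_adjoint_comp_self.eigenvalues_eq_of_apply_basis_eq_smul hn
    (basisOfOrthonormalOfCardEqFinrank hZ hcard) (μ := fun i => ‖A (Z i)‖ ^ 2)
    (by simpa using A.adjoint_comp_self_apply_of_orthonormal hZ hcard hAZ)
    (fun i j hij => pow_le_pow_left₀ (norm_nonneg _) (hanti hij) 2)
  rw [A.singularValues_fin hn, heig, Real.sqrt_sq (norm_nonneg _)]

theorem exists_orthonormal_norm_apply_eq_singularValues {n : ℕ} (hn : finrank 𝕜 E = n) :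
    ∃ Z : Fin n → E, Orthonormal 𝕜 Z ∧
      (Pairwise fun i j => inner 𝕜 (A (Z i)) (A (Z j)) = 0) ∧
      ∀ i, ‖A (Z i)‖ = A.singularValues i := by
  have hT := A.isSymmetric_adjoint_comp_self
  let B := hT.eigenvectorBasis hn
  have hinner (i j : Fin n) :
      inner 𝕜 (A (B i)) (A (B j)) = (hT.eigenvalues hn j : 𝕜) * inner 𝕜 (B i) (B j) := by
    rw [← adjoint_inner_right, ← comp_apply, hT.apply_eigenvectorBasis, inner_smul_right]
  refine ⟨B, B.orthonormal,
    fun i j hij => by simp only [hinner, B.orthonormal.2 hij, mul_zero], fun i => ?_⟩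
  refine (sq_eq_sq₀ (norm_nonneg _) (A.singularValues_nonneg _)).1 ?_
  rw [A.sq_singularValues_fin hn, @norm_sq_eq_re_inner 𝕜, hinner, inner_self_eq_norm_sq_to_K,
    B.orthonormal.1 i]
  simp

end LinearMap

theorem LinearMap.existsUnique_angles_of_norm_le {E F : Type*}
    [NormedAddCommGroup E] [InnerProductSpace ℝ E] [FiniteDimensional ℝ E]
    [NormedAddCommGroup F] [InnerProductSpace ℝ F] [FiniteDimensional ℝ F]
    (A : E →ₗ[ℝ] F) {r : ℝ} (hr : 0 < r) (hA : ∀ x, ‖A x‖ ≤ r * ‖x‖)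
    {n : ℕ} (hn : finrank ℝ E = n) :
    ∃! φ : Fin n → ℝ, Monotone φ ∧ (∀ i, 0 ≤ φ i ∧ φ i ≤ Real.pi / 2) ∧
      ∃ Z : Fin n → E, Orthonormal ℝ Z ∧ (∀ i, ‖A (Z i)‖ ^ 2 = Real.cos (φ i) ^ 2 * r ^ 2) ∧
        Pairwise fun i j => ⟪A (Z i), A (Z j)⟫ = 0 := by
  obtain ⟨B, hB, hBorth, hBσ⟩ := A.exists_orthonormal_norm_apply_eq_singularValues hn
  have hσ (i : Fin n) : A.singularValues i / r ∈ Set.Icc (0 : ℝ) 1 := by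
    refine ⟨div_nonneg (A.singularValues_nonneg _) hr.le, (div_le_one hr).2 ?_⟩
    rw [← hBσ]
    exact (hA (B i)).trans_eq (by rw [hB.1 i, mul_one])
  refine ⟨fun i => Real.arccos (A.singularValues i / r), ⟨?_, ?_, B, hB, ?_, hBorth⟩, ?_⟩
  · exact fun i j hij => Real.arccos_le_arccos
      (div_le_div_of_nonneg_right (A.singularValues_antitone hij) hr.le)
  · exact fun i => ⟨Real.arccos_nonneg _, Real.arccos_le_pi_div_two.2 (hσ i).1⟩
  · intro i
    rw [Real.cos_arccos (by linarith [(hσ i).1]) (hσ i).2, hBσ, div_pow,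
      div_mul_cancel₀ _ (by positivity)]
  · rintro ψ ⟨hψ, hψπ, Z, hZ, hZnorm, hZorth⟩
    have hψIcc (i : Fin n) : ψ i ∈ Set.Icc 0 Real.pi :=
      ⟨(hψπ i).1, (hψπ i).2.trans (by linarith [Real.pi_pos])⟩
    have hcos (i : Fin n) : 0 ≤ Real.cos (ψ i) :=
      Real.cos_nonneg_of_mem_Icc ⟨by linarith [(hψπ i).1, Real.pi_pos], (hψπ i).2⟩
    have hAZ (i : Fin n) : ‖A (Z i)‖ = Real.cos (ψ i) * r :=
      (sq_eq_sq₀ (norm_nonneg _) (by have := hcos i; positivity)).1 (by rw [hZnorm, mul_pow])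
    have hσZ := A.norm_apply_eq_singularValues_of_orthonormal hn hZ hZorth fun i j hij => by
      simp only [hAZ]
      exact mul_le_mul_of_nonneg_right (Real.antitoneOn_cos (hψIcc i) (hψIcc j) (hψ hij)) hr.le
    funext i
    rw [← hσZ, hAZ, mul_div_cancel_right₀ _ hr.ne', Real.arccos_cos (hψIcc i).1 (hψIcc i).2]

theorem norm_apply_of_skew_of_apply_apply_eq_neg_sq_smul {V : Type*} [NormedAddCommGroup V]
    [InnerProductSpace ℝ V] (T : V →ₗ[ℝ] V) (hskew : ∀ U W : V, ⟪T U, W⟫ = -⟪U, T W⟫)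
    {c : ℝ} (hc : 0 ≤ c) (hsq : ∀ U, T (T U) = -(c ^ 2) • U) (U : V) :
    ‖T U‖ = c * ‖U‖ := by
  refine (sq_eq_sq₀ (norm_nonneg _) (by positivity)).1 ?_
  rw [← real_inner_self_eq_norm_sq, hskew, hsq, inner_smul_right, real_inner_self_eq_norm_sq]
  ring

theorem stmt_5_general {v z : Type*}
    [NormedAddCommGroup v] [InnerProductSpace ℝ v] [FiniteDimensional ℝ v]
    [NormedAddCommGroup z] [InnerProductSpace ℝ z] [FiniteDimensional ℝ z]
    (J : z →ₗ[ℝ] v →ₗ[ℝ] v)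
    (hskew : ∀ (Z : z) (U V : v), ⟪J Z U, V⟫ = -⟪U, J Z V⟫)
    (hsq : ∀ (Z : z) (U : v), J Z (J Z U) = -(⟪Z, Z⟫ : ℝ) • U)
    (W : Submodule ℝ v) (ξ : v) (hξ : ξ ≠ 0)
    (m : ℕ) (hm : m = Module.finrank ℝ z) :
    ∃! φ : Fin m → ℝ,
      Monotone φ ∧ (∀ i, 0 ≤ φ i ∧ φ i ≤ Real.pi / 2) ∧
      ∃ Z : Fin m → z, Orthonormal ℝ Z ∧
        (∀ i, ‖((Submodule.orthogonalProjection W) (J (Z i) ξ) : v)‖ ^ 2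
            = Real.cos (φ i) ^ 2 * ‖ξ‖ ^ 2) ∧
        (∀ i j, i ≠ j →
          (⟪((Submodule.orthogonalProjection W) (J (Z i) ξ) : v),
            ((Submodule.orthogonalProjection W) (J (Z j) ξ) : v)⟫ : ℝ) = 0) := by
  have hJ (Z : z) : ‖J Z ξ‖ = ‖Z‖ * ‖ξ‖ :=
    norm_apply_of_skew_of_apply_apply_eq_neg_sq_smul (J Z) (hskew Z) (norm_nonneg Z)
      (by simpa [real_inner_self_eq_norm_sq] using hsq Z) ξ
  exact (W.starProjection.toLinearMap ∘ₗ J.flip ξ).existsUnique_angles_of_norm_le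
    (norm_pos_iff.2 hξ)
    (fun Z => (W.norm_starProjection_apply_le _).trans_eq ((hJ Z).trans (mul_comm _ _))) hm.symm

/-- Generalized Kähler angle: existence of a diagonalizing orthonormal basis and
uniqueness of the ordered tuple of Kähler angles. -/
theorem stmt_5 {v z : Type*}
    [NormedAddCommGroup v] [InnerProductSpace ℝ v] [FiniteDimensional ℝ v]
    [NormedAddCommGroup z] [InnerProductSpace ℝ z] [FiniteDimensional ℝ z]
    (J : z →ₗ[ℝ] v →ₗ[ℝ] v)
    (hskew : ∀ (Z : z) (U V : v), ⟪J Z U, V⟫ = -⟪U, J Z V⟫)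
    (hsq : ∀ (Z : z) (U : v), J Z (J Z U) = -(⟪Z, Z⟫ : ℝ) • U)
    (W : Submodule ℝ v) (ξ : v) (hξW : ξ ∈ W) (hξ : ξ ≠ 0)
    (m : ℕ) (hm : m = Module.finrank ℝ z) :
    ∃! φ : Fin m → ℝ,
      Monotone φ ∧ (∀ i, 0 ≤ φ i ∧ φ i ≤ Real.pi / 2) ∧
      ∃ Z : Fin m → z, Orthonormal ℝ Z ∧
        (∀ i, ‖((Submodule.orthogonalProjection W) (J (Z i) ξ) : v)‖ ^ 2
            = Real.cos (φ i) ^ 2 * ‖ξ‖ ^ 2) ∧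
        (∀ i j, i ≠ j →
          (⟪((Submodule.orthogonalProjection W) (J (Z i) ξ) : v),
            ((Submodule.orthogonalProjection W) (J (Z j) ξ) : v)⟫ : ℝ) = 0) :=
  stmt_5_general J hskew hsq W ξ hξ m hm
end

section
/- Let w⊥ be a linear subspace of Cⁿ (viewed as a real inner product space with complex structure J) and ξ ∈ w⊥ a unit vector whose Kähler angle φ satisfies 0 < φ < π/2, i.e., ‖Fξ‖ = cos φ where Fξ is the orthogonal projection of Jξ onto w⊥. Set F̄ξ = Fξ/‖Fξ‖. Then there exists a unique vector η in the orthogonal complement of the complex line Cξ such that F̄ξ = cos(φ)Jξ + sin(φ)Jη. -/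
/-!
Applying `J` to `F̄ξ = cos φ • Jξ + sin φ • Jη` and using `J² = -1` solves it for
`η = (sin φ)⁻¹ • (-J F̄ξ - cos φ • ξ)`, so `η` is unique. By skew-symmetry of `J`, this `η` is
orthogonal to `ξ` and `Jξ` exactly when `⟪F̄ξ, Jξ⟫ = cos φ` and `⟪F̄ξ, ξ⟫ = 0`: the first holds
because `⟪Fξ, Jξ⟫ = ‖Fξ‖²` for an orthogonal projection, the second because the projection is
self-adjoint, fixes `ξ ∈ w⊥`, and `Jξ ⊥ ξ`.
-/

open RealInnerProductSpace

theorem Submodule.inner_starProjection_self {V : Type*} [NormedAddCommGroup V]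
    [InnerProductSpace ℝ V] (K : Submodule ℝ V) [K.HasOrthogonalProjection] (v : V) :
    ⟪K.starProjection v, v⟫ = ‖K.starProjection v‖ ^ 2 := by
  simpa using K.re_inner_starProjection_eq_normSq v

section ComplexStructure

variable {V : Type*} [NormedAddCommGroup V] [InnerProductSpace ℝ V] {J : V →ₗ[ℝ] V}

theorem inner_map_self_eq_zero_of_skew (hJskew : ∀ x y : V, ⟪J x, y⟫ = -⟪x, J y⟫) (x : V) :
    ⟪J x, x⟫ = 0 := by
  linarith [hJskew x x, real_inner_comm x (J x)]

theorem inner_map_map_of_skew_of_sq (hJskew : ∀ x y : V, ⟪J x, y⟫ = -⟪x, J y⟫)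
    (hJsq : ∀ x : V, J (J x) = -x) (x y : V) : ⟪J x, J y⟫ = ⟪x, y⟫ := by
  rw [hJskew, hJsq, inner_neg_right, neg_neg]

theorem injective_of_map_map_eq_neg (hJsq : ∀ x : V, J (J x) = -x) : Function.Injective J :=
  fun x y h => neg_injective <| by rw [← hJsq x, ← hJsq y, h]

theorem existsUnique_eq_smul_map_add_smul_map (hJskew : ∀ x y : V, ⟪J x, y⟫ = -⟪x, J y⟫)
    (hJsq : ∀ x : V, J (J x) = -x) {ξ u : V} {c s : ℝ} (hξ : ‖ξ‖ = 1) (hs : s ≠ 0)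
    (huξ : ⟪u, ξ⟫ = 0) (huJξ : ⟪u, J ξ⟫ = c) :
    ∃! η : V, ⟪η, ξ⟫ = 0 ∧ ⟪η, J ξ⟫ = 0 ∧ u = c • J ξ + s • J η := by
  set η : V := s⁻¹ • (-J u - c • ξ)
  have hJη : J η = s⁻¹ • (u - c • J ξ) := by
    simp only [η, map_smul, map_sub, map_neg, hJsq, neg_neg]
  refine ⟨η, ⟨?_, ?_, ?_⟩, ?_⟩
  · have hJuξ : ⟪J u, ξ⟫ = -c := by rw [hJskew, huJξ]
    simp only [η, real_inner_smul_left, inner_sub_left, inner_neg_left, hJuξ,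
      real_inner_self_eq_norm_sq, hξ]
    ring
  · simp only [η, real_inner_smul_left, inner_sub_left, inner_neg_left,
      inner_map_map_of_skew_of_sq hJskew hJsq, huξ, real_inner_comm (J ξ) ξ,
      inner_map_self_eq_zero_of_skew hJskew]
    ring
  · rw [hJη, smul_smul, mul_inv_cancel₀ hs, one_smul, add_sub_cancel]
  · rintro η' ⟨-, -, hη'⟩
    have hsJη : s • J η' = s • J η := by
      rw [hJη, smul_smul, mul_inv_cancel₀ hs, one_smul, hη', add_sub_cancel_left]
    exact injective_of_map_map_eq_neg hJsq (smul_right_injective V hs hsJη)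

end ComplexStructure

theorem stmt_9_general {V : Type*}
    [NormedAddCommGroup V] [InnerProductSpace ℝ V] [FiniteDimensional ℝ V]
    (J : V →ₗ[ℝ] V)
    (hJskew : ∀ x y : V, (⟪J x, y⟫ : ℝ) = -⟪x, J y⟫)
    (hJsq : ∀ x : V, J (J x) = -x)
    (W : Submodule ℝ V) (ξ : V) (hξW : ξ ∈ W) (hξ : ‖ξ‖ = 1)
    (Fξ : V) (hFξ : Fξ = ((Submodule.orthogonalProjection W) (J ξ) : V))
    (φ : ℝ) (hφ : 0 < φ ∧ φ < Real.pi / 2)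
    (hcos : ‖Fξ‖ = Real.cos φ) :
    ∃! η : V, (⟪η, ξ⟫ : ℝ) = 0 ∧ (⟪η, J ξ⟫ : ℝ) = 0 ∧
      ‖Fξ‖⁻¹ • Fξ = Real.cos φ • J ξ + Real.sin φ • J η := by
  obtain ⟨hφ₀, hφ₁⟩ := hφ
  have hsin : Real.sin φ ≠ 0 :=
    (Real.sin_pos_of_pos_of_lt_pi hφ₀ (by linarith [Real.pi_pos])).ne'
  have hFξ_ne : ‖Fξ‖ ≠ 0 := hcos ▸ (Real.cos_pos_of_mem_Ioo ⟨by linarith, hφ₁⟩).ne'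
  replace hFξ : Fξ = W.starProjection (J ξ) := hFξ
  refine existsUnique_eq_smul_map_add_smul_map hJskew hJsq hξ hsin ?_ ?_
  · rw [real_inner_smul_left, hFξ, W.inner_starProjection_left_eq_right,
      W.starProjection_eq_self_iff.mpr hξW, inner_map_self_eq_zero_of_skew hJskew, mul_zero]
  · rw [real_inner_smul_left, hFξ, W.inner_starProjection_self, ← hFξ, ← hcos]
    field_simp

/-- Berndt–Brück Lemma: if `ξ ∈ w⊥` is a unit vector with Kähler angle
`φ ∈ (0, π/2)`, then there is a unique `η` orthogonal to the complex line
`ℂξ = span{ξ, Jξ}` with `F̄ξ = cos(φ)Jξ + sin(φ)Jη`. Here `V` is `ℂⁿ`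
regarded as a real inner product space with its complex structure `J`. -/
theorem stmt_9 {V : Type*}
    [NormedAddCommGroup V] [InnerProductSpace ℝ V] [FiniteDimensional ℝ V]
    (J : V →ₗ[ℝ] V)
    (hJorth : ∀ x y : V, (⟪J x, J y⟫ : ℝ) = ⟪x, y⟫)
    (hJskew : ∀ x y : V, (⟪J x, y⟫ : ℝ) = -⟪x, J y⟫)
    (hJsq : ∀ x : V, J (J x) = -x)
    (W : Submodule ℝ V) (ξ : V) (hξW : ξ ∈ W) (hξ : ‖ξ‖ = 1)
    (Fξ : V) (hFξ : Fξ = ((Submodule.orthogonalProjection W) (J ξ) : V))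
    (φ : ℝ) (hφ : 0 < φ ∧ φ < Real.pi / 2)
    (hcos : ‖Fξ‖ = Real.cos φ) :
    ∃! η : V, (⟪η, ξ⟫ : ℝ) = 0 ∧ (⟪η, J ξ⟫ : ℝ) = 0 ∧
      ‖Fξ‖⁻¹ • Fξ = Real.cos φ • J ξ + Real.sin φ • J η :=
  stmt_9_general J hJskew hJsq W ξ hξW hξ Fξ hFξ φ hφ hcos
end

section
/- Let α₁, α₂, α₃ ∈ R. There exists a basis of unit vectors {e₁, e₂, e₃} of R³ with ⟨e_i, e_{i+1}⟩ = α_{i+2} (indices mod 3) if and only if |α_i| < 1 for all i and α₁² + α₂² + α₃² < 1 + 2α₁α₂α₃. -/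
/-!
Unit vectors with the prescribed inner products are exactly the families whose Gram matrix is
`A = !![1, α₂, α₁; α₂, 1, α₀; α₁, α₀, 1]`; such a family is linearly independent iff `A` is
positive definite, and a positive definite `A = Bᴴ * B` is the Gram matrix of the columns of `B`.
So it remains to see that `A` is positive definite iff the inequalities hold. Necessity comes from
`0 < det A = 1 + 2α₀α₁α₂ - (α₀² + α₁² + α₂²)` and `2|A i j| < A i i + A j j`; sufficiency from
completing squares:
`(1 - α₂²) xᵀAx = (1 - α₂²)(x₀ + α₂x₁ + α₁x₂)² + ((1 - α₂²)x₁ + (α₀ - α₁α₂)x₂)² + det A · x₂²`.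
-/

open RealInnerProductSpace
open Matrix
open scoped MatrixOrder ComplexOrder

theorem Matrix.PosSemidef.exists_gram_eq {𝕜 n : Type*} [RCLike 𝕜] [Fintype n]
    {A : Matrix n n 𝕜} (hA : A.PosSemidef) :
    ∃ v : n → EuclideanSpace 𝕜 n, gram 𝕜 v = A := by
  classical
  obtain ⟨B, rfl⟩ := CStarAlgebra.nonneg_iff_eq_star_mul_self.mp hA.nonneg
  refine ⟨fun j ↦ WithLp.toLp 2 fun i ↦ B i j, ?_⟩
  ext i j
  simp [gram_apply, PiLp.inner_apply, mul_apply, mul_comm]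

theorem Matrix.PosDef.two_mul_abs_apply_lt {n : Type*} [Fintype n] [DecidableEq n]
    {A : Matrix n n ℝ} (hA : A.PosDef) {i j : n} (hij : i ≠ j) :
    2 * |A i j| < A i i + A j j := by
  have hsymm : A j i = A i j := hA.isHermitian.apply i j
  have key (s : ℝ) : 0 < A i i + s ^ 2 * A j j + 2 * s * A i j := by
    have hx : Pi.single i 1 + Pi.single j s ≠ (0 : n → ℝ) := by
      intro h
      simpa [hij] using congrFun h i
    have := hA.dotProduct_mulVec_pos hx
    simp [mulVec_add, mulVec_single, hsymm] at this
    linarith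
  have hplus := key 1
  have hminus := key (-1)
  rcases abs_cases (A i j) with ⟨h, -⟩ | ⟨h, -⟩ <;> rw [h] <;> linarith

def cyclicCorrelation (α : Fin 3 → ℝ) : Matrix (Fin 3) (Fin 3) ℝ :=
  !![1, α 2, α 1; α 2, 1, α 0; α 1, α 0, 1]

theorem gram_eq_cyclicCorrelation_iff {E : Type*} [NormedAddCommGroup E]
    [InnerProductSpace ℝ E] {e : Fin 3 → E} {α : Fin 3 → ℝ} :
    gram ℝ e = cyclicCorrelation α ↔
      (∀ i, ‖e i‖ = 1) ∧ ∀ i : Fin 3, ⟪e i, e (i + 1)⟫ = α (i + 2) := by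
  constructor
  · intro h
    have hG (i j : Fin 3) : ⟪e i, e j⟫ = cyclicCorrelation α i j := by rw [← h, gram_apply]
    refine ⟨fun i ↦ ?_, fun i ↦ ?_⟩
    · have : ⟪e i, e i⟫ = 1 := by rw [hG]; fin_cases i <;> rfl
      rw [norm_eq_sqrt_real_inner, this, Real.sqrt_one]
    · rw [hG]; fin_cases i <;> rfl
  · rintro ⟨hnorm, hinner⟩
    have h01 : ⟪e 0, e 1⟫ = α 2 := hinner 0
    have h12 : ⟪e 1, e 2⟫ = α 0 := hinner 1
    have h20 : ⟪e 2, e 0⟫ = α 1 := hinner 2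
    ext i j
    fin_cases i <;> fin_cases j <;>
      simp [gram_apply, cyclicCorrelation, hnorm, h01, h12, h20, real_inner_comm (e 0) (e 1),
        real_inner_comm (e 1) (e 2), real_inner_comm (e 2) (e 0)]

theorem dotProduct_cyclicCorrelation_mulVec (α x : Fin 3 → ℝ) :
    x ⬝ᵥ cyclicCorrelation α *ᵥ x =
      x 0 ^ 2 + x 1 ^ 2 + x 2 ^ 2 + 2 * α 2 * x 0 * x 1 + 2 * α 1 * x 0 * x 2 +
        2 * α 0 * x 1 * x 2 := by
  simp [cyclicCorrelation, dotProduct, mulVec, Fin.sum_univ_three]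
  ring

theorem posDef_cyclicCorrelation_of_abs_lt_of_lt (α : Fin 3 → ℝ) (hα₂ : |α 2| < 1)
    (hdet : α 0 ^ 2 + α 1 ^ 2 + α 2 ^ 2 < 1 + 2 * α 0 * α 1 * α 2) :
    (cyclicCorrelation α).PosDef := by
  have hherm : (cyclicCorrelation α).IsHermitian := by
    refine IsHermitian.ext fun i j ↦ ?_
    fin_cases i <;> fin_cases j <;> rfl
  refine .of_dotProduct_mulVec_pos hherm fun x hx ↦ ?_
  set s := 1 - α 2 ^ 2 with hs_def
  set D := 1 + 2 * α 0 * α 1 * α 2 - (α 0 ^ 2 + α 1 ^ 2 + α 2 ^ 2)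
  have hs : 0 < s := by rw [hs_def, sub_pos, sq_lt_one_iff_abs_lt_one]; exact hα₂
  have hD : 0 < D := sub_pos.mpr hdet
  have key : s * (x ⬝ᵥ cyclicCorrelation α *ᵥ x) =
      s * (x 0 + α 2 * x 1 + α 1 * x 2) ^ 2 + (s * x 1 + (α 0 - α 1 * α 2) * x 2) ^ 2 +
        D * x 2 ^ 2 := by
    rw [dotProduct_cyclicCorrelation_mulVec]; ring
  rw [star_trivial]
  refine pos_of_mul_pos_right ?_ hs.le
  rw [key]
  by_cases hx₂ : x 2 = 0
  · by_cases hx₁ : x 1 = 0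
    · have hx₀ : x 0 ≠ 0 := fun hx₀ ↦ hx (by ext i; fin_cases i <;> assumption)
      simp only [hx₁, hx₂, mul_zero, add_zero]
      positivity
    · simp only [hx₂, mul_zero, add_zero]
      positivity
  · positivity

theorem posDef_cyclicCorrelation_iff (α : Fin 3 → ℝ) :
    (cyclicCorrelation α).PosDef ↔
      (∀ i, |α i| < 1) ∧ α 0 ^ 2 + α 1 ^ 2 + α 2 ^ 2 < 1 + 2 * α 0 * α 1 * α 2 := by
  refine ⟨fun h ↦ ⟨fun i ↦ ?_, ?_⟩,
    fun ⟨habs, hdet⟩ ↦ posDef_cyclicCorrelation_of_abs_lt_of_lt α (habs 2) hdet⟩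
  · have hdiag (i : Fin 3) : cyclicCorrelation α i i = 1 := by fin_cases i <;> rfl
    have hentry (i j : Fin 3) (hij : i ≠ j) : |cyclicCorrelation α i j| < 1 := by
      have := h.two_mul_abs_apply_lt hij
      rw [hdiag, hdiag] at this
      linarith
    fin_cases i
    exacts [hentry 1 2 (by decide), hentry 2 0 (by decide), hentry 0 1 (by decide)]
  · have := h.det_pos
    simp [det_fin_three, cyclicCorrelation] at this
    linarith

/-- There is a basis of unit vectors `{e₁,e₂,e₃}` of `ℝ³` with
`⟪e_i, e_{i+1}⟫ = α_{i+2}` (cyclic indices) iff `|α_i| < 1` for all `i` and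
`α₁² + α₂² + α₃² < 1 + 2α₁α₂α₃`. -/
theorem stmt_12 (α : Fin 3 → ℝ) :
    (∃ e : Fin 3 → EuclideanSpace ℝ (Fin 3),
      LinearIndependent ℝ e ∧ (∀ i, ‖e i‖ = 1) ∧
      (∀ i : Fin 3, (⟪e i, e (i + 1)⟫ : ℝ) = α (i + 2))) ↔
    ((∀ i, |α i| < 1) ∧
      α 0 ^ 2 + α 1 ^ 2 + α 2 ^ 2 < 1 + 2 * α 0 * α 1 * α 2) := by
  rw [← posDef_cyclicCorrelation_iff]
  constructor
  · rintro ⟨e, hli, hunit⟩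
    exact gram_eq_cyclicCorrelation_iff.mpr hunit ▸ posDef_gram_of_linearIndependent hli
  · intro hpos
    obtain ⟨e, he⟩ := hpos.posSemidef.exists_gram_eq
    exact ⟨e, posDef_gram_iff_linearIndependent.mp (he ▸ hpos),
      gram_eq_cyclicCorrelation_iff.mp he⟩
end

section
/- Let 0 < φ₁ ≤ φ₂ ≤ φ₃ ≤ π/2. There exists a basis of unit vectors {e₁, e₂, e₃} of R³ with ⟨e_i, e_{i+1}⟩ = (cos φ_{i+2} - cos φ_i cos φ_{i+1})/(sin φ_i sin φ_{i+1}) for each cyclic permutation (i,i+1,i+2) of (1,2,3), if and only if cos φ₁ + cos φ₂ < 1 + cos φ₃. -/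
/-!
Three unit vectors with prescribed pairwise inner products `a = ⟪e₀, e₁⟫`, `b = ⟪e₁, e₂⟫`,
`c = ⟪e₂, e₀⟫` form a basis of `ℝ³` iff their Gram matrix `!![1, a, c; a, 1, b; c, b, 1]` is
positive definite, i.e. (Sylvester) iff `a² < 1` and its determinant `1 - a² - b² - c² + 2abc`
is positive; when it is, Cholesky factorisation gives the vectors explicitly.

For the prescribed values `(cos φ_{i+2} - cos φ_i cos φ_{i+1}) / (sin φ_i sin φ_{i+1})` the
determinant, multiplied by `(sin φ₁ sin φ₂ sin φ₃)²`, factors as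
`(1 + u + v + w)(1 + u - v - w)(1 - u + v - w)(1 - u - v + w)` with `u, v, w = cos φ₁, cos φ₂, cos φ₃`.
Since `1 > u ≥ v ≥ w ≥ 0`, only the last factor can fail to be positive, and it is positive
exactly when `u + v < 1 + w`; under that inequality `a² < 1` holds as well.
-/

open RealInnerProductSpace Real Matrix

def unitGramDet (a b c : ℝ) : ℝ := 1 - a ^ 2 - b ^ 2 - c ^ 2 + 2 * a * b * c

/-- The spherical law of cosines: the cosine of the angle between the sides `α` and `β` of a
spherical triangle whose third side is `γ`. -/
noncomputable def sphericalCos (α β γ : ℝ) : ℝ := (cos γ - cos α * cos β) / (sin α * sin β)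

theorem det_unitGram (a b c : ℝ) : !![1, a, c; a, 1, b; c, b, 1].det = unitGramDet a b c := by
  simp only [det_fin_three, of_apply, cons_val', cons_val_zero, cons_val_one, cons_val,
    cons_val_fin_one, unitGramDet]
  ring

section Gram

variable {E : Type*} [NormedAddCommGroup E] [InnerProductSpace ℝ E]

theorem Matrix.linearIndependent_iff_det_gram_pos {n : Type*} [Fintype n] [DecidableEq n]
    {v : n → E} : LinearIndependent ℝ v ↔ 0 < (gram ℝ v).det := by
  rw [← det_gram_ne_zero_iff_linearIndependent]
  exact ⟨(posSemidef_gram ℝ v).det_nonneg.lt_of_ne', ne_of_gt⟩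

theorem gram_eq_unitGram_iff (e : Fin 3 → E) (g : Fin 3 → ℝ) :
    gram ℝ e = !![1, g 0, g 2; g 0, 1, g 1; g 2, g 1, 1] ↔
      (∀ i, ‖e i‖ = 1) ∧ ∀ i, ⟪e i, e (i + 1)⟫ = g i := by
  have hnorm (i) : ‖e i‖ ≠ -1 := by linarith [norm_nonneg (e i)]
  rw [← Matrix.ext_iff]
  simp only [Fin.forall_fin_succ, IsEmpty.forall_iff, Fin.succ_zero_eq_one, Fin.succ_one_eq_two,
    gram_apply, of_apply, cons_val', cons_val_zero, cons_val_one, cons_val, cons_val_fin_one,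
    inner_self_eq_norm_sq_to_K, ringHom_apply, sq_eq_one_iff, hnorm, or_false, and_true,
    real_inner_comm (e 0) (e 1), real_inner_comm (e 0) (e 2), real_inner_comm (e 1) (e 2),
    zero_add, Fin.reduceAdd]
  tauto

theorem sq_lt_one_of_gram_eq_unitGram {e : Fin 3 → E} (he : LinearIndependent ℝ e) {a b c : ℝ}
    (hg : gram ℝ e = !![1, a, c; a, 1, b; c, b, 1]) : a ^ 2 < 1 := by
  have hpair := linearIndependent_iff_det_gram_pos.mp (he.comp ![0, 1] (by decide))
  rw [show gram ℝ (e ∘ ![0, 1]) = (gram ℝ e).submatrix ![0, 1] ![0, 1] from rfl, hg,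
    det_fin_two] at hpair
  simp only [submatrix_apply, of_apply, cons_val_zero, cons_val_one] at hpair
  linarith

end Gram

theorem exists_gram_eq_unitGram {a b c : ℝ} (ha : a ^ 2 < 1) (hdet : 0 ≤ unitGramDet a b c) :
    ∃ e : Fin 3 → EuclideanSpace ℝ (Fin 3), gram ℝ e = !![1, a, c; a, 1, b; c, b, 1] := by
  have ha' : 0 < 1 - a ^ 2 := by linarith
  set s := √(1 - a ^ 2)
  have hs : 0 < s := sqrt_pos.2 ha'
  have hs2 : s ^ 2 = 1 - a ^ 2 := sq_sqrt ha'.le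
  set z := √(unitGramDet a b c / s ^ 2)
  have hz2 : z ^ 2 = unitGramDet a b c / s ^ 2 := sq_sqrt (by positivity)
  have h11 : a ^ 2 + s ^ 2 = 1 := by linear_combination hs2
  have h12 : a * c + s * ((b - a * c) / s) = b := by field_simp; ring
  have h22 : c ^ 2 + (b - a * c) ^ 2 / s ^ 2 + z ^ 2 = 1 := by
    rw [hz2, unitGramDet]
    field_simp
    linear_combination (c ^ 2 - 1) * hs2
  refine ⟨![!₂[1, 0, 0], !₂[a, s, 0], !₂[c, (b - a * c) / s, z]], ?_⟩
  ext i j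
  fin_cases i <;> fin_cases j <;>
    simp only [gram_apply, PiLp.inner_apply, Fin.sum_univ_three] <;>
    simp [div_pow, mul_comm, h11, h12, h22]

theorem exists_linearIndependent_gram_eq_unitGram_iff {a b c : ℝ} :
    (∃ e : Fin 3 → EuclideanSpace ℝ (Fin 3),
        LinearIndependent ℝ e ∧ gram ℝ e = !![1, a, c; a, 1, b; c, b, 1]) ↔
      a ^ 2 < 1 ∧ 0 < unitGramDet a b c := by
  rw [← det_unitGram]
  constructor
  · rintro ⟨e, he, hg⟩
    exact ⟨sq_lt_one_of_gram_eq_unitGram he hg, hg ▸ linearIndependent_iff_det_gram_pos.mp he⟩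
  · rintro ⟨ha, hdet⟩
    obtain ⟨e, hg⟩ := exists_gram_eq_unitGram ha (det_unitGram a b c ▸ hdet.le)
    exact ⟨e, linearIndependent_iff_det_gram_pos.mpr (hg ▸ hdet), hg⟩

theorem exists_unit_basis_with_cyclic_inner_iff (g : Fin 3 → ℝ) :
    (∃ e : Fin 3 → EuclideanSpace ℝ (Fin 3),
        LinearIndependent ℝ e ∧ (∀ i, ‖e i‖ = 1) ∧ ∀ i, ⟪e i, e (i + 1)⟫ = g i) ↔
      g 0 ^ 2 < 1 ∧ 0 < unitGramDet (g 0) (g 1) (g 2) := by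
  simp_rw [← gram_eq_unitGram_iff]
  exact exists_linearIndependent_gram_eq_unitGram_iff

theorem unitGramDet_pos {u v w : ℝ} (hw : 0 ≤ w) (hwv : w ≤ v) (hvu : v ≤ u) (hu : u < 1)
    (h : u + v < 1 + w) : 0 < unitGramDet u v w := by
  have hv : v < 1 := hvu.trans_lt hu
  rw [show unitGramDet u v w = (1 - u ^ 2) * (1 - v ^ 2) - (w - u * v) ^ 2 by
    unfold unitGramDet; ring]
  -- `w - uv` lies strictly between `-(1 - u)(1 - v)` and `v (1 - u)`, and both bounds have
  -- square at most `(1 - u²)(1 - v²)`, the second one strictly.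
  rcases le_total (u * v) w with hle | hle
  · nlinarith [mul_pos (sub_pos.2 hu) (sub_pos.2 hv),
      mul_nonneg (sub_nonneg.2 hvu) (sub_nonneg.2 hu.le)]
  · nlinarith [mul_pos (sub_pos.2 hu) (sub_pos.2 hv)]

theorem one_sub_sphericalCos_sq_mul {α β : ℝ} (γ : ℝ) (hα : sin α ≠ 0) (hβ : sin β ≠ 0) :
    (1 - sphericalCos α β γ ^ 2) * (sin α * sin β) ^ 2 =
      unitGramDet (cos α) (cos β) (cos γ) := by
  unfold sphericalCos unitGramDet
  field_simp
  rw [sin_sq, sin_sq]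
  ring

theorem unitGramDet_sphericalCos_mul {α β γ : ℝ} (hα : sin α ≠ 0) (hβ : sin β ≠ 0)
    (hγ : sin γ ≠ 0) :
    unitGramDet (sphericalCos α β γ) (sphericalCos β γ α) (sphericalCos γ α β) *
        (sin α * sin β * sin γ) ^ 2 =
      (1 + cos α + cos β + cos γ) * (1 + cos α - cos β - cos γ) * (1 - cos α + cos β - cos γ) *
        (1 - cos α - cos β + cos γ) := by
  unfold sphericalCos unitGramDet
  field_simp
  rw [sin_sq, sin_sq, sin_sq]
  ring

theorem sphericalCos_sq_lt_one_and_unitGramDet_pos_iff {α β γ : ℝ} (hα : 0 < α) (hαβ : α ≤ β)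
    (hβγ : β ≤ γ) (hγ : γ ≤ π / 2) :
    sphericalCos α β γ ^ 2 < 1 ∧
        0 < unitGramDet (sphericalCos α β γ) (sphericalCos β γ α) (sphericalCos γ α β) ↔
      cos α + cos β < 1 + cos γ := by
  have hβ : 0 < β := hα.trans_le hαβ
  have hγ' : 0 < γ := hβ.trans_le hβγ
  have hsα : 0 < sin α := sin_pos_of_pos_of_lt_pi hα (by linarith [pi_pos])
  have hsβ : 0 < sin β := sin_pos_of_pos_of_lt_pi hβ (by linarith [pi_pos])
  have hsγ : 0 < sin γ := sin_pos_of_pos_of_lt_pi hγ' (by linarith [pi_pos])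
  have hcα : cos α < 1 := by
    simpa using cos_lt_cos_of_nonneg_of_le_pi le_rfl (by linarith [pi_pos]) hα
  have hcαβ : cos β ≤ cos α := cos_le_cos_of_nonneg_of_le_pi hα.le (by linarith [pi_pos]) hαβ
  have hcβγ : cos γ ≤ cos β := cos_le_cos_of_nonneg_of_le_pi hβ.le (by linarith [pi_pos]) hβγ
  have hcγ : 0 ≤ cos γ := cos_nonneg_of_mem_Icc ⟨by linarith [pi_pos], hγ⟩
  have hfactors : 0 < (1 + cos α + cos β + cos γ) * (1 + cos α - cos β - cos γ) *
      (1 - cos α + cos β - cos γ) := by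
    apply mul_pos (mul_pos _ _) <;> linarith
  have hdet := unitGramDet_sphericalCos_mul hsα.ne' hsβ.ne' hsγ.ne'
  constructor
  · rintro ⟨-, hpos⟩
    have := hdet ▸ mul_pos hpos (by positivity)
    linarith [pos_of_mul_pos_right this hfactors.le]
  · intro h
    constructor
    · have hpos := one_sub_sphericalCos_sq_mul γ hsα.ne' hsβ.ne' ▸
        unitGramDet_pos hcγ hcβγ hcαβ hcα h
      linarith [pos_of_mul_pos_left hpos (by positivity)]
    · have hpos := mul_pos hfactors (by linarith : 0 < 1 - cos α - cos β + cos γ)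
      rw [← hdet] at hpos
      exact pos_of_mul_pos_left hpos (by positivity)

/-- For `0 < φ₁ ≤ φ₂ ≤ φ₃ ≤ π/2`, a basis of unit vectors of `ℝ³` with the
inner products `⟪e_i, e_{i+1}⟫ = (cos φ_{i+2} - cos φ_i cos φ_{i+1})/(sin φ_i sin φ_{i+1})`
exists iff `cos φ₁ + cos φ₂ < 1 + cos φ₃`. -/
theorem stmt_13 (φ : Fin 3 → ℝ)
    (h0 : 0 < φ 0) (h01 : φ 0 ≤ φ 1) (h12 : φ 1 ≤ φ 2) (h2 : φ 2 ≤ π / 2) :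
    (∃ e : Fin 3 → EuclideanSpace ℝ (Fin 3),
      LinearIndependent ℝ e ∧ (∀ i, ‖e i‖ = 1) ∧
      (∀ i : Fin 3, (⟪e i, e (i + 1)⟫ : ℝ)
        = (Real.cos (φ (i + 2)) - Real.cos (φ i) * Real.cos (φ (i + 1)))
          / (Real.sin (φ i) * Real.sin (φ (i + 1))))) ↔
    Real.cos (φ 0) + Real.cos (φ 1) < 1 + Real.cos (φ 2) :=
  (exists_unit_basis_with_cyclic_inner_iff
      fun i => sphericalCos (φ i) (φ (i + 1)) (φ (i + 2))).trans
    (sphericalCos_sq_lt_one_and_unitGramDet_pos_iff h0 h01 h12 h2)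
end

section
/- Let 0 ≤ x₃ ≤ x₂ ≤ x₁ < 1. Setting α_{i+2} = (x_{i+2} - x_i x_{i+1})/(√(1-x_i²)√(1-x_{i+1}²)) for each cyclic permutation (i,i+1,i+2) of (1,2,3), the inequality α₁² + α₂² + α₃² < 1 + 2α₁α₂α₃ holds if and only if x₁ + x₂ - x₃ - 1 < 0. -/
/-!
Multiplying `α₁² + α₂² + α₃² - 1 - 2α₁α₂α₃` by the positive number `(1-x₁²)(1-x₂²)(1-x₃²)`
gives the polynomial `-(x₁-x₂-x₃+1)(x₁+x₂-x₃-1)(x₁-x₂+x₃-1)(x₁+x₂+x₃+1)`. Under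
`0 ≤ x₃ ≤ x₂ ≤ x₁ < 1` three of the four factors have a fixed sign, so the sign of the whole
expression is decided by `x₁ + x₂ - x₃ - 1`.
-/

/-- When `a`, `b`, `c` are the cosines of the sides of a spherical triangle, this is the cosine of
the angle opposite the side with cosine `c` (spherical law of cosines). -/
noncomputable def sphericalCosAngle (a b c : ℝ) : ℝ :=
  (c - a * b) / (Real.sqrt (1 - a ^ 2) * Real.sqrt (1 - b ^ 2))

theorem sphericalCosAngle_identity {a b c : ℝ} (ha : a ^ 2 < 1) (hb : b ^ 2 < 1)
    (hc : c ^ 2 < 1) :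
    (sphericalCosAngle b c a ^ 2 + sphericalCosAngle c a b ^ 2 + sphericalCosAngle a b c ^ 2
        - (1 + 2 * sphericalCosAngle b c a * sphericalCosAngle c a b * sphericalCosAngle a b c))
      * ((1 - a ^ 2) * (1 - b ^ 2) * (1 - c ^ 2))
      = -((a - b - c + 1) * (a + b - c - 1) * (a - b + c - 1) * (a + b + c + 1)) := by
  have hsa := Real.sq_sqrt (sub_pos.2 ha).le
  have hsb := Real.sq_sqrt (sub_pos.2 hb).le
  have hsc := Real.sq_sqrt (sub_pos.2 hc).le
  have := Real.sqrt_pos.2 (sub_pos.2 ha)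
  have := Real.sqrt_pos.2 (sub_pos.2 hb)
  have := Real.sqrt_pos.2 (sub_pos.2 hc)
  unfold sphericalCosAngle
  field_simp
  simp only [hsa, hsb, hsc]
  ring

theorem sphericalCosAngle_lt_iff {a b c : ℝ} (ha : a ^ 2 < 1) (hb : b ^ 2 < 1) (hc : c ^ 2 < 1) :
    sphericalCosAngle b c a ^ 2 + sphericalCosAngle c a b ^ 2 + sphericalCosAngle a b c ^ 2
        < 1 + 2 * sphericalCosAngle b c a * sphericalCosAngle c a b * sphericalCosAngle a b c ↔
      0 < (a - b - c + 1) * (a + b - c - 1) * (a - b + c - 1) * (a + b + c + 1) := by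
  have hD : 0 < (1 - a ^ 2) * (1 - b ^ 2) * (1 - c ^ 2) := by
    have := sub_pos.2 ha; have := sub_pos.2 hb; have := sub_pos.2 hc; positivity
  rw [← sub_neg, ← mul_lt_mul_iff_of_pos_right hD, zero_mul, sphericalCosAngle_identity ha hb hc,
    neg_lt_zero]

theorem four_factors_pos_iff {a b c : ℝ} (hc : 0 ≤ c) (hcb : c ≤ b) (hba : b ≤ a) (ha : a < 1) :
    0 < (a - b - c + 1) * (a + b - c - 1) * (a - b + c - 1) * (a + b + c + 1) ↔
      a + b - c - 1 < 0 := by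
  have h₁ : 0 < a - b - c + 1 := by linarith
  have h₃ : 0 < 1 - a + b - c := by linarith
  have h₄ : 0 < a + b + c + 1 := by linarith
  have hsplit : (a - b - c + 1) * (a + b - c - 1) * (a - b + c - 1) * (a + b + c + 1)
      = ((a - b - c + 1) * (1 - a + b - c) * (a + b + c + 1)) * -(a + b - c - 1) := by ring
  rw [hsplit, mul_pos_iff_of_pos_left (by positivity), neg_pos]

/-- With `0 ≤ x₃ ≤ x₂ ≤ x₁ < 1` (indices `0,1,2` for `1,2,3`) and
`α_{i+2} = (x_{i+2} - x_i x_{i+1})/(√(1-x_i²)√(1-x_{i+1}²))` cyclically, the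
inequality `α₁² + α₂² + α₃² < 1 + 2α₁α₂α₃` holds iff `x₁ + x₂ - x₃ - 1 < 0`. -/
theorem stmt_15 (x α : Fin 3 → ℝ)
    (h3 : 0 ≤ x 2) (h32 : x 2 ≤ x 1) (h21 : x 1 ≤ x 0) (h1 : x 0 < 1)
    (hα : ∀ i : Fin 3, α (i + 2)
      = (x (i + 2) - x i * x (i + 1))
        / (Real.sqrt (1 - x i ^ 2) * Real.sqrt (1 - x (i + 1) ^ 2))) :
    (α 0 ^ 2 + α 1 ^ 2 + α 2 ^ 2 < 1 + 2 * α 0 * α 1 * α 2) ↔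
      x 0 + x 1 - x 2 - 1 < 0 := by
  have hα0 : α 0 = sphericalCosAngle (x 1) (x 2) (x 0) := hα 1
  have hα1 : α 1 = sphericalCosAngle (x 2) (x 0) (x 1) := hα 2
  have hα2 : α 2 = sphericalCosAngle (x 0) (x 1) (x 2) := hα 0
  have sq_lt_one {t : ℝ} (ht₀ : 0 ≤ t) (ht₁ : t < 1) : t ^ 2 < 1 := by nlinarith
  rw [hα0, hα1, hα2, sphericalCosAngle_lt_iff (sq_lt_one (by linarith) h1)
    (sq_lt_one (by linarith) (by linarith)) (sq_lt_one h3 (by linarith))]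
  exact four_factors_pos_iff h3 h32 h21 h1
end

section
/- Let {J₁, J₂, J₃} be a canonical quaternionic structure on H^{n-1} ≅ R^{4(n-1)} (J_i² = -id, J_i J_{i+1} = J_{i+2} = -J_{i+1}J_i, each J_i orthogonal), let {e₀, e₁, e₂, e₃} be unit vectors spanning a totally real subspace (⟨J_j e_k, e_l⟩ = 0 for all j ∈ {1,2,3}, k,l ∈ {0,1,2,3}) with ⟨e₀, e_i⟩ = 0 and ⟨e_i, e_{i+1}⟩ = (cos φ_{i+2} - cos φ_i cos φ_{i+1})/(sin φ_i sin φ_{i+1}), where 0 < φ₁ ≤ φ₂ ≤ φ₃ ≤ π/2. Define ξ₀ = e₀ and ξ_k = cos(φ_k)J_k e₀ + sin(φ_k)J_k e_k for k = 1,2,3. Then {ξ₀, ξ₁, ξ₂, ξ₃} is an orthonormal set. -/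
open RealInnerProductSpace Real

/-!
Each `ξ_k` is `J_k u_k` with `u_k = cos φ_k • e₀ + sin φ_k • e_k`, a unit vector of the totally
real subspace `W = span {e₀, e₁, e₂, e₃}`, and `ξ₀ = e₀ ∈ W`. Total reality says `J_k W ⊥ W`,
which gives `ξ₀ ⊥ ξ_k`. For `j ≠ k`, up to swapping the two, `k = j + 1`, and skewness of the `J_i`
with `J_j J_{j+1} = J_{j+2}` turns `⟪J_j x, J_{j+1} y⟫` into `⟪J_{j+2} x, y⟫`, which vanishes again
by total reality.
-/

section

variable {V : Type*} [NormedAddCommGroup V] [InnerProductSpace ℝ V]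

theorem norm_cos_smul_add_sin_smul {u v : V} (hu : ‖u‖ = 1) (hv : ‖v‖ = 1) (huv : ⟪u, v⟫ = 0)
    (θ : ℝ) : ‖cos θ • u + sin θ • v‖ = 1 := by
  refine (pow_eq_one_iff_of_nonneg (norm_nonneg _) two_ne_zero).mp ?_
  rw [sq, norm_add_sq_eq_norm_sq_add_norm_sq_real
      (by rw [real_inner_smul_left, real_inner_smul_right, huv, mul_zero, mul_zero]),
    norm_smul, norm_smul, hu, hv]
  simp only [mul_one, ← sq, Real.norm_eq_abs, sq_abs, cos_sq_add_sin_sq]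

theorem inner_apply_left_eq_neg_inner_apply_right {T : V →ₗ[ℝ] V}
    (hT : ∀ x y, ⟪T x, T y⟫ = ⟪x, y⟫) (hT2 : ∀ x, T (T x) = -x) (x y : V) :
    ⟪T x, y⟫ = -⟪x, T y⟫ := by
  rw [← hT, hT2, inner_neg_left]

def TotallyReal {ι : Type*} (J : ι → V →ₗ[ℝ] V) (W : Submodule ℝ V) : Prop :=
  ∀ j, ∀ x ∈ W, ∀ y ∈ W, ⟪J j x, y⟫ = 0

theorem totallyReal_span {ι : Type*} {J : ι → V →ₗ[ℝ] V} {S : Set V}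
    (hS : ∀ j, ∀ x ∈ S, ∀ y ∈ S, ⟪J j x, y⟫ = 0) : TotallyReal J (Submodule.span ℝ S) := by
  intro j x hx y hy
  have hxS : ∀ z ∈ S, ⟪J j x, z⟫ = 0 := by
    intro z hz
    have hle : Submodule.span ℝ S ≤ ((ℝ ∙ z)ᗮ).comap (J j) :=
      Submodule.span_le.mpr fun w hw =>
        Submodule.mem_orthogonal_singleton_iff_inner_left.mpr (hS j w hw z hz)
    exact Submodule.mem_orthogonal_singleton_iff_inner_left.mp (hle hx)
  have hle : Submodule.span ℝ S ≤ (ℝ ∙ J j x)ᗮ :=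
    Submodule.span_le.mpr fun z hz =>
      Submodule.mem_orthogonal_singleton_iff_inner_right.mpr (hxS z hz)
  exact Submodule.mem_orthogonal_singleton_iff_inner_right.mp (hle hy)

theorem Fin.three_eq_add_one_or_eq_add_one_of_ne {j k : Fin 3} (h : j ≠ k) :
    k = j + 1 ∨ j = k + 1 := by
  revert j k; decide

section Quaternionic

variable {J : Fin 3 → V →ₗ[ℝ] V}

theorem inner_apply_apply_add_one (hJorth : ∀ i x y, ⟪J i x, J i y⟫ = ⟪x, y⟫)
    (hJsq : ∀ i x, J i (J i x) = -x) (hJmul : ∀ (i : Fin 3) x, J i (J (i + 1) x) = J (i + 2) x)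
    (j : Fin 3) (x y : V) : ⟪J j x, J (j + 1) y⟫ = ⟪J (j + 2) x, y⟫ := by
  rw [inner_apply_left_eq_neg_inner_apply_right (hJorth j) (hJsq j), hJmul,
    inner_apply_left_eq_neg_inner_apply_right (hJorth (j + 2)) (hJsq (j + 2))]

theorem TotallyReal.inner_apply_apply_eq_zero {W : Submodule ℝ V} (hW : TotallyReal J W)
    (hJorth : ∀ i x y, ⟪J i x, J i y⟫ = ⟪x, y⟫)
    (hJsq : ∀ i x, J i (J i x) = -x) (hJmul : ∀ (i : Fin 3) x, J i (J (i + 1) x) = J (i + 2) x)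
    {j k : Fin 3} (hjk : j ≠ k) {x y : V} (hx : x ∈ W) (hy : y ∈ W) : ⟪J j x, J k y⟫ = 0 := by
  rcases Fin.three_eq_add_one_or_eq_add_one_of_ne hjk with rfl | rfl
  · rw [inner_apply_apply_add_one hJorth hJsq hJmul, hW _ x hx y hy]
  · rw [real_inner_comm, inner_apply_apply_add_one hJorth hJsq hJmul, hW _ y hy x hx]

end Quaternionic

end

theorem stmt_16_general {V : Type*}
    [NormedAddCommGroup V] [InnerProductSpace ℝ V]
    (J : Fin 3 → V →ₗ[ℝ] V)
    (hJorth : ∀ i, ∀ x y : V, (⟪J i x, J i y⟫ : ℝ) = ⟪x, y⟫)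
    (hJsq : ∀ i, ∀ x : V, J i (J i x) = -x)
    (hJmul : ∀ i : Fin 3, ∀ x : V, J i (J (i + 1) x) = J (i + 2) x)
    (φ : Fin 3 → ℝ)
    (e₀ : V) (e : Fin 3 → V)
    (he₀ : ‖e₀‖ = 1) (he : ∀ i, ‖e i‖ = 1)
    (htotreal : ∀ j : Fin 3,
      (⟪J j e₀, e₀⟫ : ℝ) = 0 ∧ (∀ k, (⟪J j e₀, e k⟫ : ℝ) = 0) ∧
      (∀ k, (⟪J j (e k), e₀⟫ : ℝ) = 0) ∧ (∀ k l, (⟪J j (e k), e l⟫ : ℝ) = 0))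
    (horth : ∀ i, (⟪e₀, e i⟫ : ℝ) = 0)
    (ξ : Fin 4 → V) (hξ0 : ξ 0 = e₀)
    (hξ : ∀ k : Fin 3,
      ξ k.succ = Real.cos (φ k) • J k e₀ + Real.sin (φ k) • J k (e k)) :
    Orthonormal ℝ ξ := by
  set W := Submodule.span ℝ (insert e₀ (Set.range e))
  have hW : TotallyReal J W := totallyReal_span <| by
    rintro j x (rfl | ⟨k, rfl⟩) y (rfl | ⟨l, rfl⟩)
    exacts [(htotreal j).1, (htotreal j).2.1 l, (htotreal j).2.2.1 k, (htotreal j).2.2.2 k l]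
  have he₀W : e₀ ∈ W := Submodule.subset_span (Set.mem_insert _ _)
  have hu : ∀ k, cos (φ k) • e₀ + sin (φ k) • e k ∈ W := fun k =>
    W.add_mem (W.smul_mem _ he₀W)
      (W.smul_mem _ (Submodule.subset_span (Set.mem_insert_of_mem _ ⟨k, rfl⟩)))
  have htail : Matrix.vecTail ξ = fun k => J k (cos (φ k) • e₀ + sin (φ k) • e k) := by
    funext k
    simp only [Matrix.vecTail, Function.comp_apply, hξ, map_add, map_smul]
  rw [← Matrix.cons_head_tail ξ, orthonormal_vecCons_iff, htail, Matrix.vecHead, hξ0]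
  refine ⟨he₀, fun k => ?_, fun k => ?_, fun j k hjk => ?_⟩
  · rw [real_inner_comm]
    exact hW k _ (hu k) e₀ he₀W
  · exact (((J k).isometryOfInner (hJorth k)).norm_map _).trans
      (norm_cos_smul_add_sin_smul he₀ (he k) (horth k) (φ k))
  · exact hW.inner_apply_apply_eq_zero hJorth hJsq hJmul hjk (hu j) (hu k)

/-- With `{J₁,J₂,J₃}` a quaternionic structure on `ℍ^{n-1}` and `{e₀,e₁,e₂,e₃}`
unit vectors spanning a totally real subspace with the prescribed inner
products, the vectors `ξ₀ = e₀`, `ξ_k = cos(φ_k)J_k e₀ + sin(φ_k)J_k e_k`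
form an orthonormal set. -/
theorem stmt_16 {V : Type*}
    [NormedAddCommGroup V] [InnerProductSpace ℝ V] [FiniteDimensional ℝ V]
    (J : Fin 3 → V →ₗ[ℝ] V)
    (hJorth : ∀ i, ∀ x y : V, (⟪J i x, J i y⟫ : ℝ) = ⟪x, y⟫)
    (hJsq : ∀ i, ∀ x : V, J i (J i x) = -x)
    (hJmul : ∀ i : Fin 3, ∀ x : V, J i (J (i + 1) x) = J (i + 2) x)
    (hJanti : ∀ i : Fin 3, ∀ x : V, J (i + 1) (J i x) = -J (i + 2) x)
    (φ : Fin 3 → ℝ)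
    (hφ0 : 0 < φ 0) (hφ01 : φ 0 ≤ φ 1) (hφ12 : φ 1 ≤ φ 2) (hφ2 : φ 2 ≤ π / 2)
    (e₀ : V) (e : Fin 3 → V)
    (he₀ : ‖e₀‖ = 1) (he : ∀ i, ‖e i‖ = 1)
    (htotreal : ∀ j : Fin 3,
      (⟪J j e₀, e₀⟫ : ℝ) = 0 ∧ (∀ k, (⟪J j e₀, e k⟫ : ℝ) = 0) ∧
      (∀ k, (⟪J j (e k), e₀⟫ : ℝ) = 0) ∧ (∀ k l, (⟪J j (e k), e l⟫ : ℝ) = 0))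
    (horth : ∀ i, (⟪e₀, e i⟫ : ℝ) = 0)
    (hinner : ∀ i : Fin 3, (⟪e i, e (i + 1)⟫ : ℝ)
      = (Real.cos (φ (i + 2)) - Real.cos (φ i) * Real.cos (φ (i + 1)))
        / (Real.sin (φ i) * Real.sin (φ (i + 1))))
    (ξ : Fin 4 → V) (hξ0 : ξ 0 = e₀)
    (hξ : ∀ k : Fin 3,
      ξ k.succ = Real.cos (φ k) • J k e₀ + Real.sin (φ k) • J k (e k)) :
    Orthonormal ℝ ξ :=
  stmt_16_general J hJorth hJsq hJmul φ e₀ e he₀ he htotreal horth ξ hξ0 hξ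
end

section
/- In the setting of the previous construction, let w⊥ = span{ξ₀, ξ₁, ξ₂, ξ₃} and let ξ = a₀ξ₀ + a₁ξ₁ + a₂ξ₂ + a₃ξ₃ be any unit vector in w⊥. Then the 3×3 matrix with entries L_{jk} = Σ_{l=0}^{3} ⟨J_j ξ, ξ_l⟩⟨J_k ξ, ξ_l⟩ (j,k ∈ {1,2,3}) is the diagonal matrix diag(cos²φ₁, cos²φ₂, cos²φ₃). In particular, w⊥ has constant quaternionic Kähler angle (φ₁, φ₂, φ₃). -/
/-!
Write `u_k = cos φ_k • e₀ + sin φ_k • e_k`, so that `ξ_{k+1} = J_k u_k` with `e₀` and all `u_k` in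
the totally real space `W = span {e₀, e_k}`. For `x, y ∈ W` one has `⟪J_i x, J_j y⟫ = δ_ij ⟪x, y⟫`,
so `ξ` is orthonormal, and by the quaternion relations every `⟪J_j ξ_m, ξ_l⟫` is a Gram entry of
`e₀, u₀, u₁, u₂`. The prescribed `⟪e_k, e_{k+1}⟫` is exactly what makes
`⟪u_k, u_{k+1}⟫ = cos φ_{k+2}`; then `⟪J_j ζ, ξ_l⟫ = cos φ_j (q_j a)_l`, where `q_j` is left
multiplication by the quaternion unit `i`, `j` or `k`. Left multiplications by distinct units send
`a` to orthogonal vectors of the same length, whence `L = diag (cos² φ_j) · ‖a‖²` and `‖a‖ = 1`.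
-/

open RealInnerProductSpace Real Matrix

section

variable {V : Type*} [NormedAddCommGroup V] [InnerProductSpace ℝ V]

structure IsQuaternionic (J : Fin 3 → V →ₗ[ℝ] V) : Prop where
  inner_map_map_self : ∀ i, ∀ x y : V, ⟪J i x, J i y⟫ = ⟪x, y⟫
  map_map_self : ∀ i, ∀ x : V, J i (J i x) = -x
  map_map_succ : ∀ i : Fin 3, ∀ x : V, J i (J (i + 1) x) = J (i + 2) x
  map_succ_map : ∀ i : Fin 3, ∀ x : V, J (i + 1) (J i x) = -J (i + 2) x

def IsTotallyReal (J : Fin 3 → V →ₗ[ℝ] V) (W : Submodule ℝ V) : Prop :=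
  ∀ i, W.map (J i) ⟂ W

variable {J : Fin 3 → V →ₗ[ℝ] V}

theorem IsQuaternionic.inner_map_left_eq_neg (hJ : IsQuaternionic J) (i : Fin 3) (x y : V) :
    ⟪J i x, y⟫ = -⟪x, J i y⟫ := by
  have h := hJ.inner_map_map_self i x (J i y)
  rw [hJ.map_map_self, inner_neg_right] at h
  linarith

theorem isTotallyReal_span_iff {S : Set V} :
    IsTotallyReal J (Submodule.span ℝ S) ↔ ∀ i, ∀ x ∈ S, ∀ y ∈ S, ⟪J i x, y⟫ = 0 := by
  simp only [IsTotallyReal, Submodule.map_span, Submodule.isOrtho_span, Set.forall_mem_image]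

namespace IsTotallyReal

variable {W : Submodule ℝ V} {x y : V}

theorem inner_map_left_eq_zero (hW : IsTotallyReal J W) (hx : x ∈ W) (hy : y ∈ W) (i : Fin 3) :
    ⟪J i x, y⟫ = 0 :=
  (hW i).inner_eq (Submodule.mem_map_of_mem hx) hy

theorem inner_map_right_eq_zero (hW : IsTotallyReal J W) (hx : x ∈ W) (hy : y ∈ W) (i : Fin 3) :
    ⟪x, J i y⟫ = 0 := by
  rw [real_inner_comm]; exact hW.inner_map_left_eq_zero hy hx i

theorem inner_map_map (hW : IsTotallyReal J W) (hJ : IsQuaternionic J) (hx : x ∈ W) (hy : y ∈ W)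
    (i j : Fin 3) : ⟪J i x, J j y⟫ = if i = j then ⟪x, y⟫ else 0 := by
  split_ifs with hij
  · rw [hij, hJ.inner_map_map_self]
  rw [hJ.inner_map_left_eq_neg]
  obtain rfl | rfl : j = i + 1 ∨ i = j + 1 := by omega
  · rw [hJ.map_map_succ, hW.inner_map_right_eq_zero hx hy, neg_zero]
  · rw [hJ.map_succ_map, inner_neg_right, hW.inner_map_right_eq_zero hx hy, neg_zero, neg_zero]

end IsTotallyReal

theorem inner_cos_smul_add_sin_smul {x y z : V} (hx : ‖x‖ = 1) (hxy : ⟪x, y⟫ = 0)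
    (hxz : ⟪x, z⟫ = 0) (α β : ℝ) :
    ⟪cos α • x + sin α • y, cos β • x + sin β • z⟫ = cos α * cos β + sin α * sin β * ⟪y, z⟫ := by
  have hyx : ⟪y, x⟫ = 0 := by rw [real_inner_comm, hxy]
  simp only [inner_add_left, inner_add_right, real_inner_smul_left, real_inner_smul_right,
    real_inner_self_eq_norm_sq, hx, hxz, hyx]
  ring

theorem norm_cos_smul_add_sin_smul_s17 {x y : V} (hx : ‖x‖ = 1) (hy : ‖y‖ = 1) (hxy : ⟪x, y⟫ = 0)
    (θ : ℝ) : ‖cos θ • x + sin θ • y‖ = 1 := by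
  have h := inner_cos_smul_add_sin_smul hx hxy hxy θ θ
  rw [real_inner_self_eq_norm_sq, real_inner_self_eq_norm_sq, hy, one_pow, mul_one,
    ← sq, ← sq, cos_sq_add_sin_sq] at h
  exact (pow_eq_one_iff_of_nonneg (norm_nonneg _) two_ne_zero).1 h

-- Left multiplication by `i`, `j`, `k` on `ℍ = ℝ⁴` in the basis `1, i, j, k`.
def quatUnitMatrix : Fin 3 → Matrix (Fin 4) (Fin 4) ℝ :=
  ![!![0, -1, 0, 0; 1, 0, 0, 0; 0, 0, 0, -1; 0, 0, 1, 0],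
    !![0, 0, -1, 0; 0, 0, 0, 1; 1, 0, 0, 0; 0, -1, 0, 0],
    !![0, 0, 0, -1; 0, 0, -1, 0; 0, 1, 0, 0; 1, 0, 0, 0]]

theorem quatUnitMatrix_mulVec_dotProduct (j k : Fin 3) (a : Fin 4 → ℝ) :
    quatUnitMatrix j *ᵥ a ⬝ᵥ quatUnitMatrix k *ᵥ a = if j = k then a ⬝ᵥ a else 0 := by
  fin_cases j <;> fin_cases k <;>
    simp only [quatUnitMatrix, mulVec, dotProduct, Fin.sum_univ_four, Fin.isValue, cons_val,
      of_apply, Fin.reduceFinMk, ite_true, ite_false, Fin.reduceEq] <;> ring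

section Configuration

variable (hJ : IsQuaternionic J) {W : Submodule ℝ V} (hW : IsTotallyReal J W)
  {e₀ : V} {u : Fin 3 → V} (he₀W : e₀ ∈ W) (huW : ∀ k, u k ∈ W)
  {ξ : Fin 4 → V} (hξ0 : ξ 0 = e₀) (hξ : ∀ k : Fin 3, ξ k.succ = J k (u k))
include hJ hW he₀W huW hξ0 hξ

theorem orthonormal_of_isTotallyReal (he₀ : ‖e₀‖ = 1) (hu : ∀ k, ‖u k‖ = 1) :
    Orthonormal ℝ ξ := by
  rw [orthonormal_iff_ite]
  intro m l
  cases m using Fin.cases <;> cases l using Fin.cases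
  · simp [hξ0, he₀]
  · simp [hξ0, hξ, hW.inner_map_right_eq_zero he₀W (huW _), (Fin.succ_ne_zero _).symm]
  · simp [hξ0, hξ, hW.inner_map_left_eq_zero (huW _) he₀W, Fin.succ_ne_zero]
  · simp only [hξ, hW.inner_map_map hJ (huW _) (huW _), Fin.succ_inj]
    split_ifs with h
    · simp [h, hu]
    · rfl

theorem inner_map_eq_quatUnitMatrix {c : Fin 3 → ℝ} (he₀u : ∀ k, ⟪e₀, u k⟫ = c k)
    (huu : ∀ k, ⟪u k, u (k + 1)⟫ = c (k + 2)) (j : Fin 3) (m l : Fin 4) :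
    ⟪J j (ξ m), ξ l⟫ = c j * quatUnitMatrix j l m := by
  have hξ1 : ξ 1 = J 0 (u 0) := hξ 0
  have hξ2 : ξ 2 = J 1 (u 1) := hξ 1
  have hξ3 : ξ 3 = J 2 (u 2) := hξ 2
  have h01 : ∀ x, J 0 (J 1 x) = J 2 x := hJ.map_map_succ 0
  have h12 : ∀ x, J 1 (J 2 x) = J 0 x := hJ.map_map_succ 1
  have h20 : ∀ x, J 2 (J 0 x) = J 1 x := hJ.map_map_succ 2
  have h10 : ∀ x, J 1 (J 0 x) = -J 2 x := hJ.map_succ_map 0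
  have h21 : ∀ x, J 2 (J 1 x) = -J 0 x := hJ.map_succ_map 1
  have h02 : ∀ x, J 0 (J 2 x) = -J 1 x := hJ.map_succ_map 2
  have hu01 : ⟪u 0, u 1⟫ = c 2 := huu 0
  have hu12 : ⟪u 1, u 2⟫ = c 0 := huu 1
  have hu20 : ⟪u 2, u 0⟫ = c 1 := huu 2
  have hu10 : ⟪u 1, u 0⟫ = c 2 := by rw [real_inner_comm, hu01]
  have hu21 : ⟪u 2, u 1⟫ = c 0 := by rw [real_inner_comm, hu12]
  have hu02 : ⟪u 0, u 2⟫ = c 1 := by rw [real_inner_comm, hu20]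
  have hue₀ : ∀ k, ⟪u k, e₀⟫ = c k := fun k ↦ by rw [real_inner_comm, he₀u]
  fin_cases j <;> fin_cases m <;> fin_cases l <;>
    simp [quatUnitMatrix, hξ0, hξ1, hξ2, hξ3, hJ.map_map_self, h01, h12, h20, h10, h21, h02,
      hu01, hu12, hu20, hu10, hu21, hu02, hue₀, he₀u, hW.inner_map_map hJ,
      hW.inner_map_left_eq_zero, hW.inner_map_right_eq_zero, he₀W, huW]

theorem sum_inner_map_mul_inner_map {c : Fin 3 → ℝ} (he₀ : ‖e₀‖ = 1) (hu : ∀ k, ‖u k‖ = 1)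
    (he₀u : ∀ k, ⟪e₀, u k⟫ = c k) (huu : ∀ k, ⟪u k, u (k + 1)⟫ = c (k + 2)) {a : Fin 4 → ℝ}
    {ζ : V} (hζ : ζ = ∑ l, a l • ξ l) (hζunit : ‖ζ‖ = 1) (j k : Fin 3) :
    ∑ l, ⟪J j ζ, ξ l⟫ * ⟪J k ζ, ξ l⟫ = if j = k then c j ^ 2 else 0 := by
  have hcoord : ∀ j l, ⟪J j ζ, ξ l⟫ = c j * (quatUnitMatrix j *ᵥ a) l := by
    intro j l
    simp only [hζ, map_sum, map_smul, sum_inner, real_inner_smul_left,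
      inner_map_eq_quatUnitMatrix hJ hW he₀W huW hξ0 hξ he₀u huu, mulVec, dotProduct,
      Finset.mul_sum]
    exact Finset.sum_congr rfl fun m _ ↦ by ring
  have haa : a ⬝ᵥ a = 1 := by
    have h := (orthonormal_of_isTotallyReal hJ hW he₀W huW hξ0 hξ he₀ hu).inner_sum a a Finset.univ
    rw [← hζ, real_inner_self_eq_norm_sq, hζunit] at h
    simpa [dotProduct] using h.symm
  calc ∑ l, ⟪J j ζ, ξ l⟫ * ⟪J k ζ, ξ l⟫
      = c j * c k * (quatUnitMatrix j *ᵥ a ⬝ᵥ quatUnitMatrix k *ᵥ a) := by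
        simp only [hcoord, dotProduct, Finset.mul_sum]
        exact Finset.sum_congr rfl fun l _ ↦ by ring
    _ = if j = k then c j ^ 2 else 0 := by
        rw [quatUnitMatrix_mulVec_dotProduct, haa]
        split_ifs with h
        · subst h; ring
        · ring

end Configuration

end

theorem stmt_17_general {V : Type*}
    [NormedAddCommGroup V] [InnerProductSpace ℝ V]
    (J : Fin 3 → V →ₗ[ℝ] V)
    (hJorth : ∀ i, ∀ x y : V, (⟪J i x, J i y⟫ : ℝ) = ⟪x, y⟫)
    (hJsq : ∀ i, ∀ x : V, J i (J i x) = -x)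
    (hJmul : ∀ i : Fin 3, ∀ x : V, J i (J (i + 1) x) = J (i + 2) x)
    (hJanti : ∀ i : Fin 3, ∀ x : V, J (i + 1) (J i x) = -J (i + 2) x)
    (φ : Fin 3 → ℝ)
    (hφ0 : 0 < φ 0) (hφ01 : φ 0 ≤ φ 1) (hφ12 : φ 1 ≤ φ 2) (hφ2 : φ 2 ≤ π / 2)
    (e₀ : V) (e : Fin 3 → V)
    (he₀ : ‖e₀‖ = 1) (he : ∀ i, ‖e i‖ = 1)
    (htotreal : ∀ j : Fin 3,
      (⟪J j e₀, e₀⟫ : ℝ) = 0 ∧ (∀ k, (⟪J j e₀, e k⟫ : ℝ) = 0) ∧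
      (∀ k, (⟪J j (e k), e₀⟫ : ℝ) = 0) ∧ (∀ k l, (⟪J j (e k), e l⟫ : ℝ) = 0))
    (horth : ∀ i, (⟪e₀, e i⟫ : ℝ) = 0)
    (hinner : ∀ i : Fin 3, (⟪e i, e (i + 1)⟫ : ℝ)
      = (Real.cos (φ (i + 2)) - Real.cos (φ i) * Real.cos (φ (i + 1)))
        / (Real.sin (φ i) * Real.sin (φ (i + 1))))
    (ξ : Fin 4 → V) (hξ0 : ξ 0 = e₀)
    (hξ : ∀ k : Fin 3,
      ξ k.succ = Real.cos (φ k) • J k e₀ + Real.sin (φ k) • J k (e k))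
    (a : Fin 4 → ℝ) (ζ : V) (hζ : ζ = ∑ l : Fin 4, a l • ξ l)
    (hζunit : ‖ζ‖ = 1) :
    ∀ j k : Fin 3,
      (∑ l : Fin 4, (⟪J j ζ, ξ l⟫ : ℝ) * (⟪J k ζ, ξ l⟫ : ℝ))
        = if j = k then Real.cos (φ j) ^ 2 else 0 := by
  have hJ : IsQuaternionic J := ⟨hJorth, hJsq, hJmul, hJanti⟩
  have hsin : ∀ k, 0 < sin (φ k) := by
    intro k
    obtain rfl | rfl | rfl : k = 0 ∨ k = 1 ∨ k = 2 := by omega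
    all_goals exact sin_pos_of_pos_of_lt_pi (by linarith) (by linarith [pi_pos])
  set W := Submodule.span ℝ (insert e₀ (Set.range e))
  have hW : IsTotallyReal J W := isTotallyReal_span_iff.2 (by simp [htotreal])
  have he₀W : e₀ ∈ W := Submodule.subset_span (Set.mem_insert _ _)
  have heW : ∀ k, e k ∈ W := fun k ↦ Submodule.subset_span (Set.mem_insert_of_mem _ ⟨k, rfl⟩)
  set u : Fin 3 → V := fun k ↦ cos (φ k) • e₀ + sin (φ k) • e k
  have huW : ∀ k, u k ∈ W := fun k ↦ W.add_mem (W.smul_mem _ he₀W) (W.smul_mem _ (heW k))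
  have hu : ∀ k, ‖u k‖ = 1 := fun k ↦ norm_cos_smul_add_sin_smul_s17 he₀ (he k) (horth k) _
  have he₀u : ∀ k, ⟪e₀, u k⟫ = cos (φ k) := fun k ↦ by
    simp [u, inner_add_right, real_inner_smul_right, horth, he₀]
  have huu : ∀ k, ⟪u k, u (k + 1)⟫ = cos (φ (k + 2)) := fun k ↦ by
    rw [inner_cos_smul_add_sin_smul he₀ (horth k) (horth (k + 1)), hinner]
    field_simp [(hsin k).ne', (hsin (k + 1)).ne']
    ring
  have hξu : ∀ k, ξ k.succ = J k (u k) := fun k ↦ by rw [hξ, map_add, map_smul, map_smul]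
  exact sum_inner_map_mul_inner_map hJ hW he₀W huW hξ0 hξu he₀ hu he₀u huu hζ hζunit

/-- For any unit vector `ξ = a₀ξ₀ + a₁ξ₁ + a₂ξ₂ + a₃ξ₃` in
`w⊥ = span{ξ₀,ξ₁,ξ₂,ξ₃}`, the matrix
`L_{jk} = Σ_l ⟪J_j ξ, ξ_l⟫⟪J_k ξ, ξ_l⟫` equals `diag(cos²φ₁, cos²φ₂, cos²φ₃)`;
in particular `w⊥` has constant quaternionic Kähler angle `(φ₁,φ₂,φ₃)`. -/
theorem stmt_17 {V : Type*}
    [NormedAddCommGroup V] [InnerProductSpace ℝ V] [FiniteDimensional ℝ V]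
    (J : Fin 3 → V →ₗ[ℝ] V)
    (hJorth : ∀ i, ∀ x y : V, (⟪J i x, J i y⟫ : ℝ) = ⟪x, y⟫)
    (hJsq : ∀ i, ∀ x : V, J i (J i x) = -x)
    (hJmul : ∀ i : Fin 3, ∀ x : V, J i (J (i + 1) x) = J (i + 2) x)
    (hJanti : ∀ i : Fin 3, ∀ x : V, J (i + 1) (J i x) = -J (i + 2) x)
    (φ : Fin 3 → ℝ)
    (hφ0 : 0 < φ 0) (hφ01 : φ 0 ≤ φ 1) (hφ12 : φ 1 ≤ φ 2) (hφ2 : φ 2 ≤ π / 2)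
    (hφsum : Real.cos (φ 0) + Real.cos (φ 1) < 1 + Real.cos (φ 2))
    (e₀ : V) (e : Fin 3 → V)
    (he₀ : ‖e₀‖ = 1) (he : ∀ i, ‖e i‖ = 1)
    (htotreal : ∀ j : Fin 3,
      (⟪J j e₀, e₀⟫ : ℝ) = 0 ∧ (∀ k, (⟪J j e₀, e k⟫ : ℝ) = 0) ∧
      (∀ k, (⟪J j (e k), e₀⟫ : ℝ) = 0) ∧ (∀ k l, (⟪J j (e k), e l⟫ : ℝ) = 0))
    (horth : ∀ i, (⟪e₀, e i⟫ : ℝ) = 0)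
    (hinner : ∀ i : Fin 3, (⟪e i, e (i + 1)⟫ : ℝ)
      = (Real.cos (φ (i + 2)) - Real.cos (φ i) * Real.cos (φ (i + 1)))
        / (Real.sin (φ i) * Real.sin (φ (i + 1))))
    (ξ : Fin 4 → V) (hξ0 : ξ 0 = e₀)
    (hξ : ∀ k : Fin 3,
      ξ k.succ = Real.cos (φ k) • J k e₀ + Real.sin (φ k) • J k (e k))
    (a : Fin 4 → ℝ) (ζ : V) (hζ : ζ = ∑ l : Fin 4, a l • ξ l)
    (hζunit : ‖ζ‖ = 1) :
    ∀ j k : Fin 3,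
      (∑ l : Fin 4, (⟪J j ζ, ξ l⟫ : ℝ) * (⟪J k ζ, ξ l⟫ : ℝ))
        = if j = k then Real.cos (φ j) ^ 2 else 0 :=
  stmt_17_general J hJorth hJsq hJmul hJanti φ hφ0 hφ01 hφ12 hφ2 e₀ e he₀ he htotreal horth hinner ξ
    hξ0 hξ a ζ hζ hζunit
end
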